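/- arXiv:1510.00116 — 5 statements merged into one kernel-verified Lean document; each statement's English description precedes it below -/
import Mathlib

section
/- Let W ≥ 1 and let l : List Bool be a list of mark flags. If no complete aligned block of l is fully marked, then l.length < W * (l.count false + 1); that is, the total length of the list is less than W times one more than the number of live (unmarked) entries. (This is the paper's invariant that the size of the underlying linked list never exceeds a factor of W relative to the actual size of the stack, where the actual size is the number of unmarked nodes.) -/
private lemma stack_aux (W : ℕ) (hW : 1 ≤ W) :
    ∀ n (l : List Bool), l.length = n →
    (∀ k, (k + 1) * W ≤ l.length →
      ¬ (∀ b ∈ (l.drop (k * W)).take W, b = true)) →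
    l.length < W * (l.count false + 1) := by
  intro n
  induction n using Nat.strong_induction_on with
  | _ n ih =>
    intro l hl hno
    by_cases h : l.length < W
    · calc l.length < W := h
        _ ≤ W * (l.count false + 1) := Nat.le_mul_of_pos_right _ (Nat.succ_pos _)
    · push_neg at h
      -- first block is complete and has a false
      have h0 := hno 0 (by simpa using h)
      push_neg at h0
      obtain ⟨b, hb, hbt⟩ := h0
      have hbf : b = false := by cases b <;> simp_all
      subst hbf
      have hmem : false ∈ l.take W := by simpa using hb
      have hcount1 : 1 ≤ (l.take W).count false :=
        List.count_pos_iff.mpr hmem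
      -- induction on the tail
      set t := l.drop W with ht
      have htlen : t.length = l.length - W := by simp [ht]
      have hlt : t.length < n := by omega
      have hno' : ∀ k, (k + 1) * W ≤ t.length →
          ¬ (∀ b ∈ (t.drop (k * W)).take W, b = true) := by
        intro k hk
        have hk' : (k + 2) * W ≤ l.length := by
          rw [htlen] at hk; ring_nf at hk ⊢; omega
        have := hno (k + 1) hk'
        intro hall
        apply this
        intro b hb'
        apply hall
        rw [ht, List.drop_drop, show W + k * W = (k + 1) * W by ring]
        exact hb'
      have hrec := ih t.length hlt t rfl hno'
      have hsplit : l.count false = (l.take W).count false + t.count false := by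
        rw [ht, ← List.count_append, List.take_append_drop]
      have hlen : l.length = W + t.length := by omega
      calc l.length = W + t.length := hlen
        _ < W + W * (t.count false + 1) := by omega
        _ = W * (t.count false + 2) := by ring
        _ ≤ W * (l.count false + 1) := by
            apply Nat.mul_le_mul_left
            omega


/-- If `W ≥ 1` and no complete aligned block of `l` (the `k`-th block being
`(l.drop (k*W)).take W`, complete when `(k+1)*W ≤ l.length`) is fully marked,
then the length of the list is less than `W` times one more than the number
of unmarked (`false`) entries. -/
theorem stack_length_lt_of_no_fully_marked_block
    (W : ℕ) (hW : 1 ≤ W) (l : List Bool)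
    (hno : ∀ k, (k + 1) * W ≤ l.length →
      ¬ (∀ b ∈ (l.drop (k * W)).take W, b = true)) :
    l.length < W * (l.count false + 1) := by
  exact stack_aux W hW l.length l rfl hno
end

section
/- Let W ≥ 1, N : ℕ, and let l : List Bool be a list of mark flags. Suppose the number of indices k such that the k-th aligned block of l is complete and fully marked is at most N. Then every contiguous run of marked entries in l has length at most W * (N + 2); precisely, for every starting position i, ((l.drop i).takeWhile id).length ≤ W * (N + 2). (This is the combinatorial core of the paper's claim that, since at most N − 1 cleanup requests can be pending with N threads, a pop operation is assured to find an unmarked node after traversing O(W·N) consecutive marked nodes, so pop completes in a bounded number of steps.) -/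
/-!
A run of marked entries of length at least `W * (m + 1)` starting at position `i` contains the
`m` aligned blocks `i / W + 1, …, i / W + m` entirely, since the first of them starts after `i`
and the last ends no later than `i / W * W + W * (m + 1) ≤ i + W * (m + 1)`. Each of these blocks is
then complete and fully marked, so a run longer than `W * (N + 2)` would produce `N + 1` of them.
-/

def fullyMarkedBlocks (W : ℕ) (l : List Bool) : Finset ℕ :=
  (Finset.range l.length).filter fun k =>
    (k + 1) * W ≤ l.length ∧ ∀ b ∈ (l.drop (k * W)).take W, b = true

theorem List.take_drop_sublist_take_drop {α : Type*} (l : List α) {i a n m : ℕ}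
    (hia : i ≤ a) (h : a + n ≤ i + m) : ((l.drop a).take n).Sublist ((l.drop i).take m) := by
  obtain ⟨d, rfl⟩ := Nat.exists_eq_add_of_le hia
  rw [← List.drop_drop, List.take_drop]
  exact (List.drop_sublist _ _).trans (List.take_sublist_take_left (by omega))

theorem mem_fullyMarkedBlocks_of_le_run {W : ℕ} (hW : 0 < W) {l : List Bool} {i k : ℕ}
    (hi : i ≤ k * W) (hk : (k + 1) * W ≤ i + ((l.drop i).takeWhile id).length) :
    k ∈ fullyMarkedBlocks W l := by
  set run := (l.drop i).takeWhile id
  have hrun : run = (l.drop i).take run.length :=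
    List.prefix_iff_eq_take.mp (List.takeWhile_prefix id)
  have hrun_le : run.length ≤ l.length - i :=
    (List.takeWhile_prefix id).length_le.trans_eq List.length_drop
  have hblock : (k + 1) * W = k * W + W := by ring
  have hk_lt : k < (k + 1) * W := Nat.lt_of_lt_of_le k.lt_succ_self (Nat.le_mul_of_pos_right _ hW)
  refine Finset.mem_filter.mpr ⟨Finset.mem_range.mpr (by omega), by omega, fun b hb => ?_⟩
  have hb_run : b ∈ run := by
    rw [hrun]
    exact (List.take_drop_sublist_take_drop l hi (by omega)).subset hb
  exact List.mem_takeWhile_imp hb_run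

theorem le_card_fullyMarkedBlocks_of_run {W : ℕ} (hW : 0 < W) (l : List Bool) {i m : ℕ}
    (hm : W * (m + 1) ≤ ((l.drop i).takeWhile id).length) :
    m ≤ (fullyMarkedBlocks W l).card := by
  set q := i / W
  have hq_le : q * W ≤ i := Nat.div_mul_le_self i W
  have hq_lt : i < q * W + W := Nat.lt_div_mul_add hW
  calc m = (Finset.Ico (q + 1) (q + 1 + m)).card := by simp
    _ ≤ _ := Finset.card_le_card fun k hk => by
      obtain ⟨hk₁, hk₂⟩ := Finset.mem_Ico.mp hk
      have h₁ : (q + 1) * W ≤ k * W := Nat.mul_le_mul_right W hk₁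
      have h₂ : (k + 1) * W ≤ (q + 1 + m) * W := Nat.mul_le_mul_right W hk₂
      exact mem_fullyMarkedBlocks_of_le_run (i := i) hW (by linarith) (by linarith)

/-- If `W ≥ 1` and at most `N` aligned blocks of `l` are complete and fully
marked, then every contiguous run of marked (`true`) entries in `l` has length
at most `W * (N + 2)`. -/
theorem pop_traversal_bounded
    (W N : ℕ) (hW : 1 ≤ W) (l : List Bool)
    (hN : ((Finset.range l.length).filter (fun k =>
      (k + 1) * W ≤ l.length ∧ ∀ b ∈ (l.drop (k * W)).take W, b = true)).card ≤ N) :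
    ∀ i, ((l.drop i).takeWhile id).length ≤ W * (N + 2) := by
  intro i
  by_contra! hlong
  have hcard : N + 1 ≤ (fullyMarkedBlocks W l).card :=
    le_card_fullyMarkedBlocks_of_run hW l hlong.le
  exact absurd (hcard.trans hN) (by omega)
end

section
/- Let W ≥ 1 and let l : List Bool be a list of mark flags. Suppose the k-th aligned block of l is complete and fully marked, and no other complete aligned block of l is fully marked. Let l' = l.take (k*W) ++ l.drop ((k+1)*W) be the result of the clean operation removing that block. Then l'.count false = l.count false (cleanup removes only popped nodes, leaving the live stack contents unchanged), and l' has no fully marked complete aligned block (the size invariant with no fully marked block is restored after cleanup). -/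
/-!
Removing the `k`-th aligned block leaves the earlier blocks in place and shifts every later one
down by exactly one index, since the removed piece has length `W`. Hence each complete block of
the cleaned list is a complete block of the original list other than the `k`-th, and none of
those is fully marked; the live count is unchanged because the removed block holds only `true`.
-/

namespace List

variable {α : Type*}

theorem count_take_append_drop_add_count_take_drop [BEq α] (a : α) (l : List α) (m n : ℕ) :
    count a (l.take m ++ l.drop (m + n)) + count a ((l.drop m).take n) = count a l := by
  conv_rhs => rw [← take_append_drop m l, ← take_append_drop n (l.drop m), drop_drop]
  simp only [count_append]
  omega

theorem take_drop_take_append {l r : List α} {i n m : ℕ} (hin : i + n ≤ m)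
    (hm : m ≤ l.length) :
    ((l.take m ++ r).drop i).take n = (l.drop i).take n := by
  rw [drop_append_of_le_length (by rw [length_take]; omega),
    take_append_of_le_length (by simp only [length_drop, length_take]; omega),
    drop_take, take_take, Nat.min_eq_left (by omega)]

theorem drop_take_append_drop_add_of_le {l : List α} {m i : ℕ} (n : ℕ) (hm : m ≤ l.length)
    (hi : m ≤ i) :
    (l.take m ++ l.drop (m + n)).drop i = l.drop (i + n) := by
  rw [drop_append, drop_eq_nil_of_le (by rw [length_take]; omega), nil_append, drop_drop,
    length_take_of_le hm]
  congr 1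
  omega

end List

open List

section AlignedBlocks

variable {α : Type*} (W : ℕ)

def alignedBlock (l : List α) (k : ℕ) : List α := (l.drop (k * W)).take W

def removeBlock (l : List α) (k : ℕ) : List α := l.take (k * W) ++ l.drop ((k + 1) * W)

variable {W}

theorem count_removeBlock_add_count_alignedBlock [BEq α] (a : α) (l : List α) (k : ℕ) :
    (removeBlock W l k).count a + (alignedBlock W l k).count a = l.count a := by
  rw [removeBlock, add_one_mul]
  exact count_take_append_drop_add_count_take_drop a l _ _

theorem length_removeBlock {l : List α} {k : ℕ} (hk : (k + 1) * W ≤ l.length) :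
    (removeBlock W l k).length = l.length - W := by
  simp only [removeBlock, length_append, length_take, length_drop]
  rw [add_one_mul] at hk ⊢
  omega

theorem alignedBlock_removeBlock_of_lt {l : List α} {j k : ℕ} (hk : k * W ≤ l.length)
    (hjk : j < k) : alignedBlock W (removeBlock W l k) j = alignedBlock W l j :=
  take_drop_take_append (by rw [← add_one_mul]; exact Nat.mul_le_mul_right W hjk) hk

theorem alignedBlock_removeBlock_of_le {l : List α} {j k : ℕ} (hk : k * W ≤ l.length)
    (hkj : k ≤ j) : alignedBlock W (removeBlock W l k) j = alignedBlock W l (j + 1) := by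
  rw [alignedBlock, removeBlock, add_one_mul, drop_take_append_drop_add_of_le W hk
    (Nat.mul_le_mul_right W hkj), ← add_one_mul]
  rfl

theorem exists_alignedBlock_removeBlock_eq {l : List α} {j k : ℕ} (hk : (k + 1) * W ≤ l.length)
    (hj : (j + 1) * W ≤ (removeBlock W l k).length) :
    ∃ i ≠ k, (i + 1) * W ≤ l.length ∧
      alignedBlock W (removeBlock W l k) j = alignedBlock W l i := by
  have hkW : k * W ≤ l.length := le_trans (Nat.mul_le_mul_right W k.le_succ) hk
  rcases lt_or_ge j k with hjk | hkj
  · exact ⟨j, hjk.ne, le_trans (Nat.mul_le_mul_right W hjk) hkW,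
      alignedBlock_removeBlock_of_lt hkW hjk⟩
  · refine ⟨j + 1, by omega, ?_, alignedBlock_removeBlock_of_le hkW hkj⟩
    rw [length_removeBlock hk] at hj
    simp only [add_mul, one_mul] at hj hk ⊢
    omega

end AlignedBlocks

theorem clean_preserves_live_and_invariant_general
    (W : ℕ) (l : List Bool) (k : ℕ)
    (hk : (k + 1) * W ≤ l.length)
    (hmarked : ∀ b ∈ (l.drop (k * W)).take W, b = true)
    (honly : ∀ j, j ≠ k → (j + 1) * W ≤ l.length →
      ¬ (∀ b ∈ (l.drop (j * W)).take W, b = true)) :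
    (l.take (k * W) ++ l.drop ((k + 1) * W)).count false = l.count false ∧
    ∀ j, (j + 1) * W ≤ (l.take (k * W) ++ l.drop ((k + 1) * W)).length →
      ¬ (∀ b ∈ ((l.take (k * W) ++ l.drop ((k + 1) * W)).drop (j * W)).take W,
          b = true) := by
  refine ⟨?_, fun j hj (hfull : ∀ b ∈ alignedBlock W (removeBlock W l k) j, b = true) => ?_⟩
  · have hblock : (alignedBlock W l k).count false = 0 :=
      count_eq_zero.2 fun h => Bool.false_ne_true (hmarked false h)
    have hcount := count_removeBlock_add_count_alignedBlock (W := W) false l k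
    rw [hblock, add_zero] at hcount
    exact hcount
  · obtain ⟨i, hik, hi, hblock⟩ := exists_alignedBlock_removeBlock_eq hk hj
    rw [hblock] at hfull
    exact honly i hik hi hfull

/-- If the `k`-th aligned block of `l` is complete and fully marked and no other
complete aligned block is fully marked, then removing the `k`-th block preserves
the number of live (`false`) entries and leaves no fully marked complete block. -/
theorem clean_preserves_live_and_invariant
    (W : ℕ) (hW : 1 ≤ W) (l : List Bool) (k : ℕ)
    (hk : (k + 1) * W ≤ l.length)
    (hmarked : ∀ b ∈ (l.drop (k * W)).take W, b = true)
    (honly : ∀ j, j ≠ k → (j + 1) * W ≤ l.length →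
      ¬ (∀ b ∈ (l.drop (j * W)).take W, b = true)) :
    (l.take (k * W) ++ l.drop ((k + 1) * W)).count false = l.count false ∧
    ∀ j, (j + 1) * W ≤ (l.take (k * W) ++ l.drop ((k + 1) * W)).length →
      ¬ (∀ b ∈ ((l.take (k * W) ++ l.drop ((k + 1) * W)).drop (j * W)).take W,
          b = true) :=
  clean_preserves_live_and_invariant_general W l k hk hmarked honly
end

section
/- Let W ≥ 1 and define the reachable states of the stack's mark list inductively: the empty list [] is reachable; if l is reachable then l ++ [false] is reachable (a push appends a live node at the top); and if l is reachable, i < l.length, and l.get i = false, then the following state is reachable (a pop marks node i, followed by an eager clean if its block became fully marked): letting l₁ = l.set i true and k = i / W, the next state is l₁.take (k*W) ++ l₁.drop ((k+1)*W) if the k-th aligned block of l₁ is complete and fully marked, and l₁ otherwise. Then every reachable state l satisfies the invariant that no complete aligned block of l is fully marked, and consequently l.length < W * (l.count false + 1). -/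
/-- Reachable states of the stack's mark list, for cleanup window `W`:
the empty list is reachable; a push appends a live (`false`) node at the top;
a pop marks a live node at position `i`, and if the aligned block with index
`i / W` thereby becomes complete and fully marked, that block is eagerly
removed. -/
inductive StackReachable (W : ℕ) : List Bool → Prop
  | nil : StackReachable W []
  | push {l : List Bool} : StackReachable W l → StackReachable W (l ++ [false])
  | pop {l : List Bool} (i : ℕ) (hi : i < l.length) (hfalse : l[i]'hi = false) :
      StackReachable W l →
      StackReachable W
        (if (i / W + 1) * W ≤ (l.set i true).length ∧
            ∀ b ∈ ((l.set i true).drop (i / W * W)).take W, b = true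
         then (l.set i true).take (i / W * W) ++
              (l.set i true).drop ((i / W + 1) * W)
         else l.set i true)

/-- Auxiliary invariant: every complete aligned block has a `false` entry. -/
def HasFalse (W : ℕ) (l : List Bool) : Prop :=
  ∀ k, (k + 1) * W ≤ l.length →
    ∃ j, j < W ∧ ∃ h : k * W + j < l.length, l[k * W + j] = false

lemma block_iff (W : ℕ) (hW : 1 ≤ W) (l : List Bool) (k : ℕ)
    (hk : (k + 1) * W ≤ l.length) :
    (¬ ∀ b ∈ (l.drop (k * W)).take W, b = true) ↔
      ∃ j, j < W ∧ ∃ h : k * W + j < l.length, l[k * W + j] = false := by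
  have hkk : (k + 1) * W = k * W + W := by ring
  have hblocklen : ((l.drop (k * W)).take W).length = W := by
    simp; omega
  constructor
  · intro h
    by_contra hc
    push_neg at hc
    apply h
    intro b hb
    rw [List.mem_iff_getElem] at hb
    obtain ⟨j, hj, rfl⟩ := hb
    rw [hblocklen] at hj
    have hlen : k * W + j < l.length := by omega
    have := hc j hj hlen
    rw [List.getElem_take, List.getElem_drop]
    simpa using this
  · rintro ⟨j, hj, hlen, hf⟩ hall
    have hmem : ((l.drop (k * W)).take W)[j]'(by omega) ∈ (l.drop (k * W)).take W :=
      List.getElem_mem _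
    have := hall _ hmem
    rw [List.getElem_take, List.getElem_drop] at this
    rw [hf] at this
    exact Bool.false_ne_true this

lemma stackReachable_hasFalse (W : ℕ) (hW : 1 ≤ W) {l : List Bool}
    (h : StackReachable W l) : HasFalse W l := by
  induction h with
  | nil =>
    intro k hk
    simp at hk
    nlinarith
  | @push l _ ih =>
    intro k hk
    have hkk : (k + 1) * W = k * W + W := by ring
    simp only [List.length_append, List.length_singleton] at hk
    rcases le_or_gt ((k + 1) * W) l.length with hle | hlt
    · obtain ⟨j, hj, hlen, hf⟩ := ih k hle
      refine ⟨j, hj, by simp; omega, ?_⟩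
      rw [List.getElem_append_left hlen]
      exact hf
    · -- (k+1)*W = l.length + 1 ; the last element false is in block k
      have heq : (k + 1) * W = l.length + 1 := by omega
      refine ⟨l.length - k * W, by omega, by simp; omega, ?_⟩
      have hidx : k * W + (l.length - k * W) = l.length := by omega
      have : (l ++ [false])[k * W + (l.length - k * W)]'(by simp; omega)
           = (l ++ [false])[l.length]'(by simp) := by
        congr 1
      rw [this]
      simp
  | @pop l i hi hfalse _ ih =>
    have hlo : i / W * W ≤ i := Nat.div_mul_le_self i W
    have hhi : i < (i / W + 1) * W := by
      have h1 := Nat.div_add_mod i W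
      have h2 : i % W < W := Nat.mod_lt _ (by omega)
      have h3 : (i / W + 1) * W = W * (i / W) + W := by ring
      omega
    set k₀ := i / W with hk₀
    set l₁ := l.set i true with hl₁
    have hlen₁ : l₁.length = l.length := by simp [hl₁]
    have hset_ne : ∀ m (hm : m < l.length), m ≠ i → l₁[m]'(by omega) = l[m] := by
      intro m hm hne
      exact List.getElem_set_ne hne.symm _
    split_ifs with hcond
    · -- cleanup case
      obtain ⟨hcomp, _⟩ := hcond
      rw [hlen₁] at hcomp
      intro k hk
      have hlenA : (l₁.take (k₀ * W) ++ l₁.drop ((k₀ + 1) * W)).length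
          = k₀ * W + (l.length - (k₀ + 1) * W) := by
        simp [hlen₁]
        omega
      rw [hlenA] at hk
      have htakelen : (l₁.take (k₀ * W)).length = k₀ * W := by
        simp [hlen₁]; omega
      have hkk : (k + 1) * W = k * W + W := by ring
      have hk₀k : (k₀ + 1) * W = k₀ * W + W := by ring
      rcases lt_or_ge k k₀ with hlt | hle
      · -- block k sits entirely in the take part
        have hkle : (k + 1) * W ≤ k₀ * W := Nat.mul_le_mul_right W (by omega)
        obtain ⟨j, hj, hjl, hf⟩ := ih k (by omega)
        have hidx : k * W + j < k₀ * W := by omega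
        refine ⟨j, hj, by omega, ?_⟩
        rw [List.getElem_append_left (by omega : k * W + j < (l₁.take (k₀ * W)).length)]
        rw [List.getElem_take]
        rw [hset_ne _ (by omega) (by omega)]
        exact hf
      · -- block k of the new list is block k+1 of l
        have hkge : k₀ * W ≤ k * W := Nat.mul_le_mul_right W hle
        have hk1 : (k₀ + 1) * W ≤ (k + 1) * W := Nat.mul_le_mul_right W (by omega)
        have hk2 : (k + 1 + 1) * W = (k + 1) * W + W := by ring
        obtain ⟨j, hj, hjl, hf⟩ := ih (k + 1) (by omega)
        refine ⟨j, hj, by omega, ?_⟩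
        rw [List.getElem_append_right (by omega : (l₁.take (k₀ * W)).length ≤ k * W + j)]
        rw [List.getElem_drop]
        have hidx : (k₀ + 1) * W + (k * W + j - (l₁.take (k₀ * W)).length)
            = (k + 1) * W + j := by
          rw [htakelen]; omega
        have : l₁[(k₀ + 1) * W + (k * W + j - (l₁.take (k₀ * W)).length)]'(by omega)
             = l₁[(k + 1) * W + j]'(by omega) := by
          congr 1
        rw [this, hset_ne _ (by omega) (by omega)]
        exact hf
    · -- no cleanup
      intro k hk
      rw [hlen₁] at hk
      have hkk : (k + 1) * W = k * W + W := by ring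
      rcases eq_or_ne k k₀ with heq | hne
      · subst heq
        -- the condition failed, so the block is not fully marked
        have : ¬ ∀ b ∈ (l₁.drop (k₀ * W)).take W, b = true := by
          intro hall
          exact hcond ⟨by rw [hlen₁]; exact hk, hall⟩
        have := (block_iff W hW l₁ k₀ (by omega)).mp this
        obtain ⟨j, hj, hjl, hf⟩ := this
        exact ⟨j, hj, by omega, hf⟩
      · obtain ⟨j, hj, hjl, hf⟩ := ih k hk
        have hidx : k * W + j ≠ i := by
          rcases lt_or_gt_of_ne hne with hlt | hgt
          · have : (k + 1) * W ≤ k₀ * W := Nat.mul_le_mul_right W (by omega)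
            omega
          · have : (k₀ + 1) * W ≤ k * W := Nat.mul_le_mul_right W (by omega)
            omega
        refine ⟨j, hj, by omega, ?_⟩
        rw [hset_ne _ (by omega) hidx]
        exact hf

lemma count_bound (W : ℕ) (hW : 1 ≤ W) :
    ∀ n (l : List Bool), l.length ≤ n → HasFalse W l →
      l.length < W * (l.count false + 1) := by
  intro n
  induction n with
  | zero =>
    intro l hl _
    have : l.length = 0 := by omega
    rw [this]
    positivity
  | succ n ih =>
    intro l hl hf
    by_cases hlen : l.length < W
    · have : W ≤ W * (l.count false + 1) := Nat.le_mul_of_pos_right _ (by omega)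
      omega
    · push_neg at hlen
      obtain ⟨j, hj, hjl, hfj⟩ := hf 0 (by simpa using hlen)
      simp only [Nat.zero_mul, Nat.zero_add] at hjl hfj
      have hf' : HasFalse W (l.drop W) := by
        intro k hk
        rw [List.length_drop] at hk
        have h1 : (k + 1 + 1) * W = (k + 1) * W + W := by ring
        have h2 : (k + 1) * W = k * W + W := by ring
        obtain ⟨j', hj', hjl', hfj'⟩ := hf (k + 1) (by omega)
        refine ⟨j', hj', by simp; omega, ?_⟩
        rw [List.getElem_drop]
        have : l[W + (k * W + j')]'(by omega) = l[(k + 1) * W + j']'(by omega) := by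
          congr 1; ring
        rw [this]
        exact hfj'
      have ihl' := ih (l.drop W) (by simp; omega) hf'
      have hcount : l.count false = (l.take W).count false + (l.drop W).count false := by
        rw [← List.count_append, List.take_append_drop]
      have hmem : false ∈ l.take W := by
        rw [List.mem_iff_getElem]
        exact ⟨j, by simp; omega, by rw [List.getElem_take]; exact hfj⟩
      have hcpos : 0 < (l.take W).count false := List.count_pos_iff.mpr hmem
      rw [List.length_drop] at ihl'
      have hc1 : (l.drop W).count false + 1 ≤ l.count false := by omega
      calc l.length = (l.length - W) + W := by omega
        _ < W * ((l.drop W).count false + 1) + W := by omega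
        _ = W * ((l.drop W).count false + 1 + 1) := by ring
        _ ≤ W * (l.count false + 1) := Nat.mul_le_mul_left _ (by omega)

/-- Every reachable state has no complete aligned block fully marked, and
consequently the list length is less than `W` times one more than the number
of live entries. -/
theorem stackReachable_invariant
    (W : ℕ) (hW : 1 ≤ W) (l : List Bool) (hreach : StackReachable W l) :
    (∀ k, (k + 1) * W ≤ l.length →
      ¬ (∀ b ∈ (l.drop (k * W)).take W, b = true)) ∧
    l.length < W * (l.count false + 1) := by
  have hf := stackReachable_hasFalse W hW hreach
  refine ⟨fun k hk => (block_iff W hW l k hk).mpr (hf k hk), ?_⟩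
  exact count_bound W hW l.length l le_rfl hf
end

section
/- Let p : ℕ and let f : ℕ → Finset ℕ describe the set of phase numbers of pending push requests at each time step. Suppose that for every time s and every x ∈ f (s+1) with x ≤ p: f s is nonempty, x ∈ f s, and x is not the minimum element of f s (i.e., at each step the pending request of minimum phase is completed and removed, and all newly announced requests receive phase numbers strictly greater than p). Then for every time t, p ∉ f (t + c), where c = ((f t).filter (· ≤ p)).card. In particular, a request with phase p pending at time t is completed within at most c steps. (This is the combinatorial core of the paper's lemma that, under min-phase helping with a monotonically increasing global phase counter, every push request adds its entry to the stack within a bounded number of steps, establishing wait-freedom.) -/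
/-- Min-phase helping completes every pending push request in a bounded number
of steps: if at each step every still-pending phase `x ≤ p` was pending before
and was not the minimum pending phase (the minimum-phase request is completed,
and newly announced requests have phases `> p`), then a phase `p` is no longer
pending after `c` steps, where `c` is the number of pending phases `≤ p` at the
starting time. -/
theorem min_phase_helping_bounded
    (p : ℕ) (f : ℕ → Finset ℕ)
    (hstep : ∀ s, ∀ x ∈ f (s + 1), x ≤ p →
      ∃ h : (f s).Nonempty, x ∈ f s ∧ x ≠ (f s).min' h) :
    ∀ t, p ∉ f (t + ((f t).filter (· ≤ p)).card) := by
  intro t hp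
  set g : ℕ → Finset ℕ := fun s => (f s).filter (· ≤ p) with hg
  -- one-step decrease
  have key : ∀ s, (g (s+1)).Nonempty → (g (s+1)).card + 1 ≤ (g s).card := by
    intro s hne
    obtain ⟨y, hy⟩ := hne
    have hy' := Finset.mem_filter.mp hy
    obtain ⟨hfs, _, _⟩ := hstep s y hy'.1 hy'.2
    have hminle : (f s).min' hfs ≤ p :=
      le_trans (Finset.min'_le _ y ((hstep s y hy'.1 hy'.2).2.1)) hy'.2
    have hsub : g (s+1) ⊆ (g s).erase ((f s).min' hfs) := by
      intro x hx
      have hx' := Finset.mem_filter.mp hx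
      obtain ⟨_, hxfs, hxne⟩ := hstep s x hx'.1 hx'.2
      exact Finset.mem_erase.mpr ⟨hxne, Finset.mem_filter.mpr ⟨hxfs, hx'.2⟩⟩
    have hmem : (f s).min' hfs ∈ g s :=
      Finset.mem_filter.mpr ⟨(f s).min'_mem hfs, hminle⟩
    calc (g (s+1)).card + 1 ≤ ((g s).erase ((f s).min' hfs)).card + 1 :=
          by exact Nat.add_le_add_right (Finset.card_le_card hsub) 1
      _ = (g s).card := by
          rw [Finset.card_erase_of_mem hmem]
          exact Nat.succ_pred_eq_of_pos (Finset.card_pos.mpr ⟨_, hmem⟩)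
  have main : ∀ k, (g (t+k)).Nonempty → (g (t+k)).card + k ≤ (g t).card := by
    intro k
    induction k with
    | zero => intro _; simp
    | succ n ih =>
      intro hne
      have h1 : (g (t+n+1)).card + 1 ≤ (g (t+n)).card := key (t+n) (by rw [Nat.add_assoc]; exact hne)
      have hne' : (g (t+n)).Nonempty := by
        by_contra h
        rw [Finset.not_nonempty_iff_eq_empty] at h
        simp [h] at h1
      have := ih hne'
      have : (g (t+n+1)).card + (n+1) ≤ (g t).card := by omega
      rwa [Nat.add_assoc] at this
  have hpg : p ∈ g (t + (g t).card) := Finset.mem_filter.mpr ⟨hp, le_refl p⟩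
  have := main (g t).card ⟨p, hpg⟩
  have hpos : 0 < (g (t + (g t).card)).card := Finset.card_pos.mpr ⟨p, hpg⟩
  omega
end
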